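/- If a connected, 3-edge-connected graph X admits a nonabelian group of automorphisms acting semiregularly on vertices and darts, then the Jacobian Jac(X) is not cyclic, i.e., its minimal number of generators is at least 2. -/

import Mathlib

/-- A multigraph in the dart model: a finite nonempty set of darts, an involution
reversing darts, and an incidence map assigning to each dart its initial vertex.
Semiedges (fixed darts), loops and parallel edges are allowed. -/
structure Multigraph where
  D : Type
  V : Type
  instFintypeD : Fintype D
  instDecEqD : DecidableEq D
  instNonemptyD : Nonempty D
  instFintypeV : Fintype V
  instDecEqV : DecidableEq V
  inv : D → D
  inv_inv : ∀ x, inv (inv x) = x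
  vtx : D → V
  vtx_surj : Function.Surjective vtx

attribute [instance] Multigraph.instFintypeD Multigraph.instDecEqD
  Multigraph.instNonemptyD Multigraph.instFintypeV Multigraph.instDecEqV

namespace Multigraph

variable (X : Multigraph)

/-- The darts emanating from a vertex. -/
def dartsAt (v : X.V) : Finset X.D := Finset.univ.filter (fun x => X.vtx x = v)

/-- One step along a dart belonging to the set `P` of allowed darts. -/
def step (P : Set X.D) (u v : X.V) : Prop :=
  ∃ x, x ∈ P ∧ X.vtx x = u ∧ X.vtx (X.inv x) = v

/-- Any two vertices are joined by a walk using only darts from `P`. -/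
def PreconnectedOn (P : Set X.D) : Prop :=
  ∀ u v : X.V, Relation.ReflTransGen (X.step P) u v

/-- A multigraph is connected if any two vertices are joined by a walk. -/
def Connected : Prop := X.PreconnectedOn Set.univ

/-- Number of edges in an inv-closed set of darts (semiedges count once). -/
def edgeCount (S : Finset X.D) : ℕ :=
  (S.card + (S.filter (fun x => X.inv x = x)).card) / 2

/-- A spanning tree: an inv-closed set of darts which connects all vertices and
has exactly `|V| - 1` edges. -/
def IsSpanningTree (S : Finset X.D) : Prop :=
  (∀ x ∈ S, X.inv x ∈ S) ∧ X.PreconnectedOn ↑S ∧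
    X.edgeCount S = Fintype.card X.V - 1

/-- The number of spanning trees. -/
noncomputable def tau : ℕ := Nat.card {S : Finset X.D // X.IsSpanningTree S}

/-- A simple graph: no loops, no semiedges, no parallel edges. -/
def Simple : Prop :=
  (∀ x, X.vtx x ≠ X.vtx (X.inv x)) ∧
  (∀ x y, X.vtx x = X.vtx y → X.vtx (X.inv x) = X.vtx (X.inv y) → x = y)

/-- `X` is at least `k`-edge-connected: removing fewer than `k` edges
leaves it connected. -/
def EdgeConnectedGE (k : ℕ) : Prop :=
  ∀ S : Finset X.D, (∀ x ∈ S, X.inv x ∈ S) → X.edgeCount S < k →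
    X.PreconnectedOn (↑S)ᶜ

/-- The automorphism group of a multigraph, as a subgroup of the permutations
of the darts: permutations commuting with the dart-reversing involution and
preserving the partition of darts into vertices. -/
def autGroup : Subgroup (Equiv.Perm X.D) where
  carrier := {f | (∀ x, f (X.inv x) = X.inv (f x)) ∧
    ∀ x y, X.vtx x = X.vtx y ↔ X.vtx (f x) = X.vtx (f y)}
  one_mem' := ⟨fun _ => rfl, fun _ _ => Iff.rfl⟩
  mul_mem' := by
    rintro f g ⟨hf1, hf2⟩ ⟨hg1, hg2⟩
    refine ⟨fun x => ?_, fun x y => ?_⟩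
    · simp [Equiv.Perm.mul_apply, hg1, hf1]
    · simp only [Equiv.Perm.mul_apply]
      exact (hg2 x y).trans (hf2 (g x) (g y))
  inv_mem' := by
    rintro f ⟨hf1, hf2⟩
    refine ⟨fun x => f.injective ?_, fun x y => ?_⟩
    · rw [Equiv.Perm.coe_inv, Equiv.apply_symm_apply, hf1, Equiv.apply_symm_apply]
    · have := hf2 (f⁻¹ x) (f⁻¹ y)
      simpa [Equiv.Perm.coe_inv, Equiv.apply_symm_apply] using this.symm

end Multigraph

/-- A covering of multigraphs: a surjective graph homomorphism restricting to a
bijection on the darts at each vertex. -/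
structure Covering (X Y : Multigraph) where
  toFun : X.D → Y.D
  surj : Function.Surjective toFun
  map_inv : ∀ x, toFun (X.inv x) = Y.inv (toFun x)
  map_vtx : ∀ x y, X.vtx x = X.vtx y → Y.vtx (toFun x) = Y.vtx (toFun y)
  loc_inj : ∀ x y, X.vtx x = X.vtx y → toFun x = toFun y → x = y
  loc_surj : ∀ x z, Y.vtx z = Y.vtx (toFun x) →
    ∃ y, X.vtx y = X.vtx x ∧ toFun y = z

namespace Covering

variable {X Y : Multigraph} (ψ : Covering X Y)

/-- The covering is `n`-fold: every fibre has cardinality `n`. -/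
def IsNFold (n : ℕ) : Prop := ∀ z : Y.D, Nat.card {x : X.D // ψ.toFun x = z} = n

/-- The group of covering transformations: automorphisms `f` of `X`
with `ψ ∘ f = ψ`. -/
def CT : Subgroup (Equiv.Perm X.D) where
  carrier := {f | f ∈ X.autGroup ∧ ∀ x, ψ.toFun (f x) = ψ.toFun x}
  one_mem' := ⟨X.autGroup.one_mem, fun _ => rfl⟩
  mul_mem' := by
    rintro f g ⟨hf1, hf2⟩ ⟨hg1, hg2⟩
    exact ⟨X.autGroup.mul_mem hf1 hg1, fun x => by
      simp [Equiv.Perm.mul_apply, hf2, hg2]⟩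
  inv_mem' := by
    rintro f ⟨hf1, hf2⟩
    refine ⟨X.autGroup.inv_mem hf1, fun x => ?_⟩
    conv_rhs => rw [← (by simp : f (f⁻¹ x) = x)]
    rw [hf2]

/-- The covering is regular: the covering transformations act transitively
(hence regularly) on every fibre. -/
def IsRegular : Prop :=
  ∀ x y, ψ.toFun x = ψ.toFun y → ∃ f ∈ ψ.CT, f x = y

end Covering
namespace Multigraph

variable (X : Multigraph)

/-- The Laplacian of `X` acting on integer divisors (functions on vertices):
`(Δ f) v = Σ_{x ∈ D_v} (f v - f (head of x))`, summing over darts with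
multiplicity. -/
def lap : (X.V → ℤ) →+ (X.V → ℤ) :=
  AddMonoidHom.mk'
    (fun f v => ∑ x ∈ X.dartsAt v, (f v - f (X.vtx (X.inv x))))
    (by
      intro f g
      funext v
      simp only [Pi.add_apply]
      rw [← Finset.sum_add_distrib]
      exact Finset.sum_congr rfl fun x _ => by ring)

/-- The group of divisors of degree `0`. -/
def div0 : AddSubgroup (X.V → ℤ) where
  carrier := {f | ∑ v, f v = 0}
  zero_mem' := by simp
  add_mem' := by
    intro a b ha hb
    simp only [Set.mem_setOf_eq, Pi.add_apply, Finset.sum_add_distrib] at *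
    simp [ha, hb]
  neg_mem' := by
    intro a ha
    simp only [Set.mem_setOf_eq, Pi.neg_apply, Finset.sum_neg_distrib] at *
    simp [ha]

/-- The Jacobian (critical group) of `X` as divisors: the degree-zero divisors
modulo the image of the Laplacian, `Jac(X) = Div₀(X)/Δ(Div(X))`. -/
def jacDiv : Type := X.div0 ⧸ (X.lap.range.addSubgroupOf X.div0)

instance : AddCommGroup X.jacDiv :=
  QuotientAddGroup.Quotient.addCommGroup (X.lap.range.addSubgroupOf X.div0)

end Multigraph

section AuxJac

open Finset

namespace Multigraph

variable {X : Multigraph}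

instance instNonemptyV (X : Multigraph) : Nonempty X.V :=
  ⟨X.vtx (Classical.arbitrary X.D)⟩

lemma lap_apply (f : X.V → ℤ) (v : X.V) :
    X.lap f v = ∑ x ∈ X.dartsAt v, (f v - f (X.vtx (X.inv x))) := rfl

lemma mem_dartsAt {x : X.D} {v : X.V} : x ∈ X.dartsAt v ↔ X.vtx x = v := by
  simp [dartsAt]

lemma mem_div0 {f : X.V → ℤ} : f ∈ X.div0 ↔ ∑ v, f v = 0 := Iff.rfl

lemma aut_inv (g : X.autGroup) (x : X.D) :
    (g : Equiv.Perm X.D) (X.inv x) = X.inv ((g : Equiv.Perm X.D) x) :=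
  g.2.1 x

lemma aut_vtx (g : X.autGroup) (x y : X.D) :
    X.vtx x = X.vtx y ↔ X.vtx ((g : Equiv.Perm X.D) x) = X.vtx ((g : Equiv.Perm X.D) y) :=
  g.2.2 x y

/-- The permutation of vertices induced by an automorphism. -/
noncomputable def vmapAux (X : Multigraph) (g : X.autGroup) : X.V → X.V :=
  fun v => X.vtx ((g : Equiv.Perm X.D) (Function.surjInv X.vtx_surj v))

lemma vtx_vmap (g : X.autGroup) (x : X.D) :
    X.vtx ((g : Equiv.Perm X.D) x) = vmapAux X g (X.vtx x) :=
  (aut_vtx g x (Function.surjInv X.vtx_surj (X.vtx x))).mp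
    (Function.surjInv_eq X.vtx_surj (X.vtx x)).symm

lemma vmap_mul (g h : X.autGroup) :
    vmapAux X (g * h) = vmapAux X g ∘ vmapAux X h := by
  funext v
  show X.vtx (((g * h : X.autGroup) : Equiv.Perm X.D) (Function.surjInv X.vtx_surj v)) = _
  rw [Subgroup.coe_mul, Equiv.Perm.mul_apply, vtx_vmap]
  rfl

lemma vmap_one : vmapAux X 1 = id := by
  funext v
  show X.vtx ((1 : Equiv.Perm X.D) (Function.surjInv X.vtx_surj v)) = v
  simp [Function.surjInv_eq X.vtx_surj]

lemma vmap_bij (g : X.autGroup) : Function.Bijective (vmapAux X g) := by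
  have h1 : vmapAux X g⁻¹ ∘ vmapAux X g = id := by
    rw [← vmap_mul, inv_mul_cancel, vmap_one]
  have h2 : vmapAux X g ∘ vmapAux X g⁻¹ = id := by
    rw [← vmap_mul, mul_inv_cancel, vmap_one]
  exact ⟨Function.LeftInverse.injective (fun x => congrFun h1 x),
    Function.RightInverse.surjective (fun x => congrFun h2 x)⟩

lemma dartsAt_vmap (g : X.autGroup) (v : X.V) :
    X.dartsAt (vmapAux X g v) = (X.dartsAt v).map (g : Equiv.Perm X.D).toEmbedding := by
  ext y
  simp only [Finset.mem_map, Equiv.coe_toEmbedding, mem_dartsAt]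
  constructor
  · intro hy
    refine ⟨(g : Equiv.Perm X.D)⁻¹ y, ?_, Equiv.apply_symm_apply _ _⟩
    have h2 : X.vtx ((g : Equiv.Perm X.D) ((g : Equiv.Perm X.D)⁻¹ y)) =
        vmapAux X g (X.vtx ((g : Equiv.Perm X.D)⁻¹ y)) := vtx_vmap g _
    rw [Equiv.Perm.coe_inv, Equiv.apply_symm_apply, hy] at h2
    exact (vmap_bij g).1 h2.symm
  · rintro ⟨x, hx, rfl⟩
    rw [vtx_vmap, hx]

lemma lap_pull (g : X.autGroup) (f : X.V → ℤ) (v : X.V) :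
    X.lap (fun u => f (vmapAux X g u)) v = X.lap f (vmapAux X g v) := by
  rw [lap_apply, lap_apply, dartsAt_vmap g v, Finset.sum_map]
  apply Finset.sum_congr rfl
  intro x hx
  simp only [Equiv.coe_toEmbedding]
  rw [← aut_inv, vtx_vmap]

/-- Pull-back of divisors of degree zero along an automorphism. -/
noncomputable def pull0 (X : Multigraph) (g : X.autGroup) : X.div0 →+ X.div0 where
  toFun f := ⟨fun v => (f : X.V → ℤ) (vmapAux X g v), by
    rw [mem_div0, Function.Bijective.sum_comp (vmap_bij g)]
    exact mem_div0.mp f.2⟩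
  map_zero' := by apply Subtype.ext; funext v; rfl
  map_add' := by intro a b; apply Subtype.ext; funext v; rfl

lemma coe_pull0 (g : X.autGroup) (f : X.div0) (v : X.V) :
    ((pull0 X g f : X.div0) : X.V → ℤ) v = (f : X.V → ℤ) (vmapAux X g v) := rfl

lemma pull0_range (g : X.autGroup) :
    X.lap.range.addSubgroupOf X.div0 ≤
      (X.lap.range.addSubgroupOf X.div0).comap (pull0 X g) := by
  intro f hf
  rw [AddSubgroup.mem_addSubgroupOf] at hf
  rw [AddSubgroup.mem_comap, AddSubgroup.mem_addSubgroupOf]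
  obtain ⟨k, hk⟩ := hf
  refine ⟨fun v => k (vmapAux X g v), ?_⟩
  funext v
  rw [lap_pull, hk]
  rfl

/-- The induced endomorphism of the Jacobian. -/
noncomputable def Pmap (X : Multigraph) (g : X.autGroup) : X.jacDiv →+ X.jacDiv :=
  QuotientAddGroup.map (X.lap.range.addSubgroupOf X.div0)
    (X.lap.range.addSubgroupOf X.div0) (pull0 X g) (pull0_range g)

lemma Pmap_mk (g : X.autGroup) (f : X.div0) :
    Pmap X g (QuotientAddGroup.mk f) = QuotientAddGroup.mk (pull0 X g f) := rfl

/-- Endomorphisms of a cyclic group commute. -/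
lemma endo_comm {A : Type} [AddCommGroup A] (hA : IsAddCyclic A) (φ ψ : A →+ A)
    (x : A) : φ (ψ x) = ψ (φ x) := by
  obtain ⟨a, ha⟩ := hA.exists_zsmul_surjective
  obtain ⟨n, hn⟩ := ha x
  obtain ⟨p, hp⟩ := ha (φ a)
  obtain ⟨q, hq⟩ := ha (ψ a)
  rw [← hn, map_zsmul, map_zsmul, map_zsmul, map_zsmul, ← hp, ← hq,
    map_zsmul, map_zsmul, ← hp, ← hq, smul_comm p q a]

/-- The key cut lemma: if `lap h ≠ 0` in a 3-edge-connected graph, then the sum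
of `lap h` over the set of maxima of `h` is at least `3`. -/
lemma cut_lemma (h3 : X.EdgeConnectedGE 3) (h : X.V → ℤ) (hne : X.lap h ≠ 0) :
    ∃ M : Finset X.V, 3 ≤ ∑ v ∈ M, X.lap h v := by
  classical
  have hVne : (Finset.univ : Finset X.V).Nonempty := Finset.univ_nonempty
  set m := Finset.univ.sup' hVne h with hmdef
  set M : Finset X.V := Finset.univ.filter (fun v => h v = m) with hMdef
  have hmem : ∀ v, v ∈ M ↔ h v = m := by intro v; simp [hMdef]
  have hle : ∀ v, h v ≤ m := fun v => Finset.le_sup' h (Finset.mem_univ v)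
  obtain ⟨u, hu⟩ : ∃ u, u ∈ M := by
    obtain ⟨u, _, hu⟩ := Finset.exists_mem_eq_sup' hVne h
    exact ⟨u, (hmem u).2 hu.symm⟩
  obtain ⟨w, hw⟩ : ∃ w, w ∉ M := by
    by_contra hc
    push_neg at hc
    apply hne
    funext v
    have hconst : ∀ v, h v = m := fun v => (hmem v).1 (hc v)
    simp [lap_apply, hconst]
  set S1 : Finset X.D :=
    Finset.univ.filter (fun x => X.vtx x ∈ M ∧ X.vtx (X.inv x) ∉ M) with hS1
  set S2 : Finset X.D :=
    Finset.univ.filter (fun x => X.vtx x ∉ M ∧ X.vtx (X.inv x) ∈ M) with hS2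
  set S : Finset X.D := S1 ∪ S2 with hS
  have hmemS : ∀ x, x ∈ S ↔
      ((X.vtx x ∈ M ∧ X.vtx (X.inv x) ∉ M) ∨ (X.vtx x ∉ M ∧ X.vtx (X.inv x) ∈ M)) := by
    intro x; simp [hS, hS1, hS2]
  have hinvS : ∀ x ∈ S, X.inv x ∈ S := by
    intro x hx
    rw [hmemS] at hx ⊢
    rw [X.inv_inv]
    tauto
  have hnotconn : ¬ X.PreconnectedOn (↑S)ᶜ := by
    intro hP
    have key : ∀ z, Relation.ReflTransGen (X.step (↑S : Set X.D)ᶜ) u z → z ∈ M := by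
      intro z hz
      induction hz with
      | refl => exact hu
      | tail _ hstep ih =>
        obtain ⟨x, hxP, hxv, hxh⟩ := hstep
        by_contra hzM
        apply hxP
        show x ∈ (↑S : Set X.D)
        rw [Finset.mem_coe, hmemS]
        exact Or.inl ⟨by rw [hxv]; exact ih, by rw [hxh]; exact hzM⟩
    exact hw (key w (hP u w))
  have hec : 3 ≤ X.edgeCount S := by
    by_contra hlt
    exact hnotconn (h3 S hinvS (by omega))
  have hsemi : S.filter (fun x => X.inv x = x) = ∅ := by
    rw [Finset.filter_eq_empty_iff]
    intro x hx hfix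
    rw [hmemS, hfix] at hx
    tauto
  have hdisj : Disjoint S1 S2 := by
    rw [Finset.disjoint_left]
    intro x hx1 hx2
    rw [hS1, Finset.mem_filter] at hx1
    rw [hS2, Finset.mem_filter] at hx2
    tauto
  have hcards : S1.card = S2.card := by
    apply Finset.card_bij' (fun x _ => X.inv x) (fun x _ => X.inv x)
    · intro x hx
      rw [hS1, Finset.mem_filter] at hx
      rw [hS2, Finset.mem_filter, X.inv_inv]
      exact ⟨Finset.mem_univ _, hx.2.2, hx.2.1⟩
    · intro x hx
      rw [hS2, Finset.mem_filter] at hx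
      rw [hS1, Finset.mem_filter, X.inv_inv]
      exact ⟨Finset.mem_univ _, hx.2.2, hx.2.1⟩
    · intro x _; exact X.inv_inv x
    · intro x _; exact X.inv_inv x
  have hScard : S.card = 2 * S1.card := by
    rw [hS, Finset.card_union_of_disjoint hdisj, ← hcards]
    ring
  have hS1card : 3 ≤ S1.card := by
    have hecS : X.edgeCount S = S1.card := by
      show (S.card + (S.filter (fun x => X.inv x = x)).card) / 2 = S1.card
      rw [hsemi, hScard]
      simp
    omega
  refine ⟨M, ?_⟩
  set t : X.D → ℤ := fun x => h (X.vtx x) - h (X.vtx (X.inv x)) with ht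
  have hfib := Finset.sum_fiberwise_eq_sum_filter Finset.univ M X.vtx t
  have hsum1 : ∑ v ∈ M, X.lap h v =
      ∑ x ∈ Finset.univ.filter (fun x => X.vtx x ∈ M), t x := by
    rw [← hfib]
    apply Finset.sum_congr rfl
    intro v _
    rw [lap_apply]
    apply Finset.sum_congr rfl
    intro x hx
    have hxv : X.vtx x = v := mem_dartsAt.mp hx
    simp only [ht]
    rw [hxv]
  set A := Finset.univ.filter (fun x => X.vtx x ∈ M) with hA
  have hAfil : A.filter (fun x => X.vtx (X.inv x) ∉ M) = S1 := by
    rw [hA, Finset.filter_filter, hS1]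
  have hzero : ∑ x ∈ A.filter (fun x => ¬ X.vtx (X.inv x) ∉ M), t x = 0 := by
    apply Finset.sum_eq_zero
    intro x hx
    rw [Finset.mem_filter, hA, Finset.mem_filter] at hx
    push_neg at hx
    have h1 : h (X.vtx x) = m := (hmem _).1 hx.1.2
    have h2 : h (X.vtx (X.inv x)) = m := (hmem _).1 hx.2
    rw [ht]
    simp [h1, h2]
  have hsplit : ∑ x ∈ A, t x = ∑ x ∈ S1, t x := by
    rw [← Finset.sum_filter_add_sum_filter_not A (fun x => X.vtx (X.inv x) ∉ M) t,
      hzero, hAfil, add_zero]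
  have hterm : ∀ x ∈ S1, 1 ≤ t x := by
    intro x hx
    rw [hS1, Finset.mem_filter] at hx
    have h1 : h (X.vtx x) = m := (hmem _).1 hx.2.1
    have h2 : h (X.vtx (X.inv x)) < m :=
      lt_of_le_of_ne (hle _) (fun hc => hx.2.2 ((hmem _).2 hc))
    simp only [ht]
    omega
  calc (3 : ℤ) ≤ (S1.card : ℤ) := by exact_mod_cast hS1card
    _ = ∑ _x ∈ S1, (1 : ℤ) := by simp
    _ ≤ ∑ x ∈ S1, t x := Finset.sum_le_sum hterm
    _ = ∑ v ∈ M, X.lap h v := by rw [hsum1, hsplit]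

/-- If the Jacobian is cyclic, the vertex actions of two automorphisms commute. -/
lemma vmap_comm (h3 : X.EdgeConnectedGE 3) (hcyc : IsAddCyclic X.jacDiv)
    (p q : X.autGroup) (v₀ : X.V) :
    vmapAux X (p * q) v₀ = vmapAux X (q * p) v₀ := by
  classical
  by_contra hne
  set u := vmapAux X (p * q) v₀ with hu
  set w := vmapAux X (q * p) v₀ with hw
  set f : X.V → ℤ := fun v => (if v = u then 1 else 0) - (if v = w then 1 else 0) with hf
  have hf0 : f ∈ X.div0 := by
    rw [mem_div0]
    simp [hf, Finset.sum_sub_distrib, Finset.sum_ite_eq']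
  have hcomm := endo_comm hcyc (Pmap X p) (Pmap X q) (QuotientAddGroup.mk ⟨f, hf0⟩)
  rw [Pmap_mk, Pmap_mk, Pmap_mk, Pmap_mk] at hcomm
  replace hcomm : (QuotientAddGroup.mk (pull0 X p (pull0 X q ⟨f, hf0⟩)) :
      X.div0 ⧸ X.lap.range.addSubgroupOf X.div0) =
      QuotientAddGroup.mk (pull0 X q (pull0 X p ⟨f, hf0⟩)) := hcomm
  rw [QuotientAddGroup.eq,
    AddSubgroup.mem_addSubgroupOf] at hcomm
  obtain ⟨k, hk⟩ := hcomm
  have hk' : ∀ v, X.lap k v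
      = f (vmapAux X (p * q) v) - f (vmapAux X (q * p) v) := by
    intro v
    have h1 : X.lap k v =
        -f (vmapAux X q (vmapAux X p v)) + f (vmapAux X p (vmapAux X q v)) :=
      congrFun hk v
    rw [h1, vmap_mul p q, vmap_mul q p, Function.comp_apply, Function.comp_apply,
      neg_add_eq_sub]
  have hlapv₀ : X.lap k v₀ = 2 := by
    rw [hk' v₀, ← hu, ← hw]
    norm_num [hf, hne, Ne.symm hne]
  have hnz : X.lap k ≠ 0 := by
    intro h0
    rw [h0] at hlapv₀
    simp at hlapv₀
  obtain ⟨M, hM⟩ := cut_lemma h3 k hnz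
  have hub : ∀ v ∈ M, X.lap k v ≤ (if v = v₀ then 2 else 0) := by
    intro v _
    rw [hk' v]
    by_cases hv : v = v₀
    · subst hv
      rw [if_pos rfl, ← hu, ← hw]
      norm_num [hf, hne, Ne.symm hne]
    · rw [if_neg hv]
      have h1 : vmapAux X (p * q) v ≠ u := by
        rw [hu]
        exact fun hc => hv ((vmap_bij (p * q)).1 hc)
      have h2 : vmapAux X (q * p) v ≠ w := by
        rw [hw]
        exact fun hc => hv ((vmap_bij (q * p)).1 hc)
      simp only [hf, if_neg h1, if_neg h2]
      split_ifs <;> omega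
  have hle2 : ∑ v ∈ M, X.lap k v ≤ 2 := by
    calc ∑ v ∈ M, X.lap k v ≤ ∑ v ∈ M, (if v = v₀ then 2 else 0) :=
          Finset.sum_le_sum hub
      _ ≤ 2 := by
          rw [Finset.sum_ite_eq' M v₀ (fun _ => (2 : ℤ))]
          split_ifs <;> norm_num
  have : (3 : ℤ) ≤ 2 := le_trans hM hle2
  norm_num at this

end Multigraph

end AuxJac

/-- If a connected, 3-edge-connected graph `X` admits a nonabelian group of
automorphisms acting semiregularly on vertices and darts, then the Jacobian
of `X` is not cyclic. -/
theorem jac_not_cyclic_of_nonabelian_semiregular (X : Multigraph)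
    (hconn : X.Connected) (h3 : X.EdgeConnectedGE 3)
    (G : Subgroup X.autGroup)
    (hsemiD : ∀ g : G, (∃ x : X.D, (g : Equiv.Perm X.D) x = x) → g = 1)
    (hsemiV : ∀ g : G,
      (∃ x : X.D, X.vtx ((g : Equiv.Perm X.D) x) = X.vtx x) → g = 1)
    (hnab : ¬ ∀ a b : G, a * b = b * a) :
    ¬ IsAddCyclic X.jacDiv := by
  intro hcyc
  apply hnab
  intro a b
  have x₀ : X.D := Classical.arbitrary X.D
  have hclaim := Multigraph.vmap_comm h3 hcyc (↑a) (↑b) (X.vtx x₀)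
  have hcv : Multigraph.vmapAux X ((↑b * ↑a : X.autGroup)⁻¹ * (↑a * ↑b)) (X.vtx x₀)
      = X.vtx x₀ := by
    rw [Multigraph.vmap_mul, Function.comp_apply, hclaim,
      ← Function.comp_apply (f := Multigraph.vmapAux X (↑b * ↑a : X.autGroup)⁻¹),
      ← Multigraph.vmap_mul, inv_mul_cancel, Multigraph.vmap_one, id_eq]
  have hc1 : ((b * a)⁻¹ * (a * b) : G) = 1 := by
    apply hsemiV
    refine ⟨x₀, ?_⟩
    have hgoal : X.vtx (((((b * a)⁻¹ * (a * b) : G) : X.autGroup) : Equiv.Perm X.D) x₀)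
        = X.vtx x₀ := by
      rw [Multigraph.vtx_vmap]
      have hcoe : (((b * a)⁻¹ * (a * b) : G) : X.autGroup)
          = ((↑b * ↑a : X.autGroup)⁻¹ * (↑a * ↑b)) := rfl
      rw [hcoe]
      exact hcv
    exact hgoal
  exact (inv_mul_eq_one.mp hc1).symm
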